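/- Let t be a normal λ-term and v a closed λ-term. If t[λy₁₁…λy₁ₙ₁.α / x₁, …, λy_{r1}…λy_{rn_r}.α / x_r] →β v (simultaneous substitution), then x_i ∉ Fv(t) for every 1 ≤ i ≤ r. -/
import Mathlib


/-!
Common development: pure λ-calculus in de Bruijn notation, β-reduction,
weak head reduction, types of system F (with type constants), the typing
systems F, F₀ (F without (∀e)) and the simple system S, saturated sets and
interpretations, and the notions of input / output / data types, following
Farkh-Nour, "Les types de données syntaxiques du système F".
-/

namespace FarkhNour

/-- Pure λ-terms, in de Bruijn notation. -/
inductive Trm : Type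
  | var : ℕ → Trm
  | app : Trm → Trm → Trm
  | lam : Trm → Trm

/-- Lift (shift) by `d` the free variables of a term, starting at index `k`. -/
def liftTrm (d : ℕ) : ℕ → Trm → Trm
  | k, .var n => if n < k then .var n else .var (n + d)
  | k, .app a b => .app (liftTrm d k a) (liftTrm d k b)
  | k, .lam a => .lam (liftTrm d (k + 1) a)

/-- β-substitution `t[u/k]` (the binder for `k` is consumed: variables above `k`
are decremented), as used in the β-reduction rule. -/
def substTrm : Trm → ℕ → Trm → Trm
  | .var n, k, u => if n < k then .var n else if n = k then liftTrm k 0 u else .var (n - 1)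
  | .app a b, k, u => .app (substTrm a k u) (substTrm b k u)
  | .lam a, k, u => .lam (substTrm a (k + 1) u)

/-- Named-style capture-avoiding substitution `t[u/x]` of the term `u` for the
free variable `x` of `t` : the other free variables are left unchanged. -/
def replaceVar : Trm → ℕ → Trm → Trm
  | .var n, k, u => if n = k then u else .var n
  | .app a b, k, u => .app (replaceVar a k u) (replaceVar b k u)
  | .lam a, k, u => .lam (replaceVar a (k + 1) (liftTrm 1 0 u))

/-- Lifting of a parallel substitution under a binder. -/
def liftSub (σ : ℕ → Trm) : ℕ → Trm
  | 0 => .var 0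
  | n + 1 => liftTrm 1 0 (σ n)

/-- Simultaneous (parallel) capture-avoiding substitution. -/
def msubst (σ : ℕ → Trm) : Trm → Trm
  | .var n => σ n
  | .app a b => .app (msubst σ a) (msubst σ b)
  | .lam a => .lam (msubst (liftSub σ) a)

/-- One step of β-reduction. -/
inductive BetaStep : Trm → Trm → Prop
  | beta (t u : Trm) : BetaStep (.app (.lam t) u) (substTrm t 0 u)
  | appL {t t' : Trm} (u : Trm) : BetaStep t t' → BetaStep (.app t u) (.app t' u)
  | appR (t : Trm) {u u' : Trm} : BetaStep u u' → BetaStep (.app t u) (.app t u')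
  | lam {t t' : Trm} : BetaStep t t' → BetaStep (.lam t) (.lam t')

/-- Many-step β-reduction `t →β t'`. -/
def BetaRed : Trm → Trm → Prop := Relation.ReflTransGen BetaStep

/-- β-equivalence `t ≃β t'`. -/
def BetaEq : Trm → Trm → Prop := Relation.EqvGen BetaStep

/-- A term is normal iff no β-reduction step applies to it. -/
def IsNormal (t : Trm) : Prop := ∀ u, ¬ BetaStep t u

/-- `FreeIn k t` : the variable (de Bruijn index) `k` occurs free in `t`. -/
def FreeIn : ℕ → Trm → Prop
  | k, .var n => n = k
  | k, .app a b => FreeIn k a ∨ FreeIn k b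
  | k, .lam a => FreeIn (k + 1) a

/-- A closed term. -/
def TrmClosed (t : Trm) : Prop := ∀ k, ¬ FreeIn k t

/-- One step of weak head reduction. -/
inductive WHStep : Trm → Trm → Prop
  | beta (t u : Trm) : WHStep (.app (.lam t) u) (substTrm t 0 u)
  | app {t t' : Trm} (u : Trm) : WHStep t t' → WHStep (.app t u) (.app t' u)

/-- Weak head reduction `t ≻_f t'`. -/
def WHRed : Trm → Trm → Prop := Relation.ReflTransGen WHStep

/-- Types of system F, in de Bruijn notation, with type constants
(the constant `0` is the distinguished constant `O`, the constant `1` is `⊥`). -/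
inductive Ty : Type
  | var : ℕ → Ty
  | const : ℕ → Ty
  | arr : Ty → Ty → Ty
  | all : Ty → Ty

/-- The distinguished type constant `O`. -/
def tyO : Ty := .const 0

/-- The distinguished type constant `⊥`. -/
def tyBot : Ty := .const 1

/-- Lift (shift) by `d` the free type variables, starting at index `k`. -/
def liftTy (d : ℕ) : ℕ → Ty → Ty
  | k, .var n => if n < k then .var n else .var (n + d)
  | _, .const c => .const c
  | k, .arr a b => .arr (liftTy d k a) (liftTy d k b)
  | k, .all a => .all (liftTy d (k + 1) a)

/-- Capture-avoiding type substitution `A[G/k]`. -/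
def substTy : Ty → ℕ → Ty → Ty
  | .var n, k, G => if n < k then .var n else if n = k then liftTy k 0 G else .var (n - 1)
  | .const c, _, _ => .const c
  | .arr a b, k, G => .arr (substTy a k G) (substTy b k G)
  | .all a, k, G => .all (substTy a (k + 1) G)

/-- `TyFreeIn k A` : the type variable `k` occurs free in `A`. -/
def TyFreeIn : ℕ → Ty → Prop
  | k, .var n => n = k
  | _, .const _ => False
  | k, .arr a b => TyFreeIn k a ∨ TyFreeIn k b
  | k, .all a => TyFreeIn (k + 1) a

/-- Boolean version of `TyFreeIn`. -/
def tyFreeInB : ℕ → Ty → Bool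
  | k, .var n => n == k
  | _, .const _ => false
  | k, .arr a b => tyFreeInB k a || tyFreeInB k b
  | k, .all a => tyFreeInB (k + 1) a

/-- A closed type. -/
def TyClosed (A : Ty) : Prop := ∀ k, ¬ TyFreeIn k A

/-- `ContainsConst c A` : the type constant `c` occurs in `A`. -/
def ContainsConst : ℕ → Ty → Prop
  | _, .var _ => False
  | c, .const c' => c' = c
  | c, .arr a b => ContainsConst c a ∨ ContainsConst c b
  | c, .all a => ContainsConst c a

/-- The typing judgment `Γ ⊢_F t : A` of system F, with rules
(ax), (→i), (→e), (∀i), (∀e). -/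
inductive TypF : List Ty → Trm → Ty → Prop
  | var (Γ : List Ty) (n : ℕ) (A : Ty) : Γ[n]? = some A → TypF Γ (.var n) A
  | abs {Γ : List Ty} {t : Trm} {B C : Ty} :
      TypF (B :: Γ) t C → TypF Γ (.lam t) (.arr B C)
  | app {Γ : List Ty} {u v : Trm} {B C : Ty} :
      TypF Γ u (.arr B C) → TypF Γ v B → TypF Γ (.app u v) C
  | allI {Γ : List Ty} {t : Trm} {A : Ty} :
      TypF (Γ.map (liftTy 1 0)) t A → TypF Γ t (.all A)
  | allE {Γ : List Ty} {t : Trm} {A : Ty} (G : Ty) :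
      TypF Γ t (.all A) → TypF Γ t (substTy A 0 G)

/-- The typing judgment `Γ ⊢_{F₀} t : A` of system F₀, i.e. system F
without the rule (∀e). -/
inductive TypF0 : List Ty → Trm → Ty → Prop
  | var (Γ : List Ty) (n : ℕ) (A : Ty) : Γ[n]? = some A → TypF0 Γ (.var n) A
  | abs {Γ : List Ty} {t : Trm} {B C : Ty} :
      TypF0 (B :: Γ) t C → TypF0 Γ (.lam t) (.arr B C)
  | app {Γ : List Ty} {u v : Trm} {B C : Ty} :
      TypF0 Γ u (.arr B C) → TypF0 Γ v B → TypF0 Γ (.app u v) C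
  | allI {Γ : List Ty} {t : Trm} {A : Ty} :
      TypF0 (Γ.map (liftTy 1 0)) t A → TypF0 Γ t (.all A)

/-- The typing judgment `Γ ⊢_S t : A` of the simple type system S,
with rules (ax), (→i), (→e) only. -/
inductive TypS : List Ty → Trm → Ty → Prop
  | var (Γ : List Ty) (n : ℕ) (A : Ty) : Γ[n]? = some A → TypS Γ (.var n) A
  | abs {Γ : List Ty} {t : Trm} {B C : Ty} :
      TypS (B :: Γ) t C → TypS Γ (.lam t) (.arr B C)
  | app {Γ : List Ty} {u v : Trm} {B C : Ty} :
      TypS Γ u (.arr B C) → TypS Γ v B → TypS Γ (.app u v) C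

/-- Quantifier-free types (types of the simple type system S). -/
def QFree : Ty → Prop
  | .var _ => True
  | .const _ => True
  | .arr a b => QFree a ∧ QFree b
  | .all _ => False

/-- An input type : a closed type all of whose normal inhabitants are
typable in system F₀. -/
def IsInputType (E : Ty) : Prop :=
  TyClosed E ∧ ∀ t : Trm, IsNormal t → TypF [] t E → TypF0 [] t E

/-- An output type : a closed type `S` not containing the constant `O` such
that for every normal term `t`, if `α : O ⊢_F t : S` then `α ∉ Fv(t)`. -/
def IsOutputType (S : Ty) : Prop :=
  TyClosed S ∧ ¬ ContainsConst 0 S ∧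
    ∀ t : Trm, IsNormal t → TypF [tyO] t S → ¬ FreeIn 0 t

/-- A syntactical data type : a closed type which is both input and output. -/
def IsSyntacticalDataType (D : Ty) : Prop := IsInputType D ∧ IsOutputType D

mutual
  /-- The ∀⁺ types (positive quantifiers). -/
  inductive PosTy : Ty → Prop
    | var (n : ℕ) : PosTy (.var n)
    | arr {B A : Ty} : NegTy B → PosTy A → PosTy (.arr B A)
    | all {A : Ty} : PosTy A → TyFreeIn 0 A → PosTy (.all A)
  /-- The ∀⁻ types (negative quantifiers). -/
  inductive NegTy : Ty → Prop
    | var (n : ℕ) : NegTy (.var n)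
    | arr {B A : Ty} : PosTy B → NegTy A → NegTy (.arr B A)
end

/-- `EndsInConst c A` : the type `A` ends in the type constant `c`. -/
inductive EndsInConst : ℕ → Ty → Prop
  | base (c : ℕ) : EndsInConst c (.const c)
  | arr {c : ℕ} {A : Ty} (B : Ty) : EndsInConst c A → EndsInConst c (.arr B A)
  | all {c : ℕ} {A : Ty} : EndsInConst c A → EndsInConst c (.all A)

/-- `EndsInVar k A` : the type `A` ends in the type variable `k`
(crossing a quantifier ∀X with X ≠ the variable is allowed). -/
inductive EndsInVar : ℕ → Ty → Prop
  | base (k : ℕ) : EndsInVar k (.var k)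
  | arr {k : ℕ} {A : Ty} (B : Ty) : EndsInVar k A → EndsInVar k (.arr B A)
  | all {k : ℕ} {A : Ty} : EndsInVar (k + 1) A → EndsInVar k (.all A)

/-- The side condition of the restricted rule (∀e)_F : the body `A` of `∀X A`
(the variable X having index `k`) is of the form
`∀X₀(A₁ → ∀X₁(A₂ → … → ∀X_{n-1}(A_n → ∀X_n Y)…))` with `Y = X` or one of the
`A_i` ending in `X`. -/
inductive FFForm : ℕ → Ty → Prop
  | base (k : ℕ) : FFForm k (.var k)
  | all {k : ℕ} {A : Ty} : FFForm (k + 1) A → FFForm k (.all A)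
  | arrTail {k : ℕ} {C : Ty} (B : Ty) : FFForm k C → FFForm k (.arr B C)
  | arrHit {k : ℕ} {B C : Ty} : EndsInVar k B → (∃ j, EndsInVar j C) →
      FFForm k (.arr B C)

/-- The typing judgment of system F_F : system F where the rule (∀e) is
replaced by the restricted rule (∀e)_F. -/
inductive TypFF : List Ty → Trm → Ty → Prop
  | var (Γ : List Ty) (n : ℕ) (A : Ty) : Γ[n]? = some A → TypFF Γ (.var n) A
  | abs {Γ : List Ty} {t : Trm} {B C : Ty} :
      TypFF (B :: Γ) t C → TypFF Γ (.lam t) (.arr B C)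
  | app {Γ : List Ty} {u v : Trm} {B C : Ty} :
      TypFF Γ u (.arr B C) → TypFF Γ v B → TypFF Γ (.app u v) C
  | allI {Γ : List Ty} {t : Trm} {A : Ty} :
      TypFF (Γ.map (liftTy 1 0)) t A → TypFF Γ t (.all A)
  | allE {Γ : List Ty} {t : Trm} {A : Ty} (G : Ty) :
      FFForm 0 A → TypFF Γ t (.all A) → TypFF Γ t (substTy A 0 G)

/-- An output type of system F_F. -/
def IsOutputTypeFF (S : Ty) : Prop :=
  TyClosed S ∧ ¬ ContainsConst 0 S ∧
    ∀ t : Trm, IsNormal t → TypFF [tyO] t S → ¬ FreeIn 0 t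

/-- Saturated sets of λ-terms. -/
def Saturated (G : Set Trm) : Prop := ∀ t u : Trm, WHRed t u → u ∈ G → t ∈ G

/-- `G → G'` on sets of λ-terms. -/
def SetArr (G G' : Set Trm) : Set Trm := {u : Trm | ∀ t ∈ G, Trm.app u t ∈ G'}

/-- Extension of an interpretation by a set for the (de Bruijn) variable 0. -/
def consEnv (G : Set Trm) (I : ℕ → Set Trm) : ℕ → Set Trm
  | 0 => G
  | n + 1 => I n

/-- The value `|A|_I` of a type in an interpretation (`C` interprets the
type constants, `I` the type variables). -/
def TyVal (C : ℕ → Set Trm) : Ty → (ℕ → Set Trm) → Set Trm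
  | .var n, I => I n
  | .const c, _ => C c
  | .arr a b, I => SetArr (TyVal C a I) (TyVal C b I)
  | .all a, I => {t : Trm | ∀ G : Set Trm, Saturated G → t ∈ TyVal C a (consEnv G I)}

/-- `|A|` : the intersection of the values of `A` under all interpretations
by saturated sets. -/
def TyGlobal (A : Ty) : Set Trm :=
  {t : Trm | ∀ C I : ℕ → Set Trm, (∀ c, Saturated (C c)) → (∀ n, Saturated (I n)) →
    t ∈ TyVal C A I}

/-- A data type in Krivine's sense : a closed type `A` with `|A| ≠ ∅` such that
every term of `|A|` β-reduces to a closed term. -/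
def IsDataType (A : Ty) : Prop :=
  TyClosed A ∧ TyGlobal A ≠ ∅ ∧
    ∀ t ∈ TyGlobal A, ∃ t' : Trm, BetaRed t t' ∧ TrmClosed t'

/-- The product type `A ∧ B = ∀X((A → (B → X)) → X)` (X fresh). -/
def tyAnd (A B : Ty) : Ty :=
  .all (.arr (.arr (liftTy 1 0 A) (.arr (liftTy 1 0 B) (.var 0))) (.var 0))

/-- The disjoint sum type `A ∨ B = ∀X((A → X) → ((B → X) → X))` (X fresh). -/
def tyOr (A B : Ty) : Ty :=
  .all (.arr (.arr (liftTy 1 0 A) (.var 0))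
    (.arr (.arr (liftTy 1 0 B) (.var 0)) (.var 0)))

/-- The type `LA = ∀X(X → ((A → (X → X)) → X))` of lists of objects of `A`. -/
def tyList (A : Ty) : Ty :=
  .all (.arr (.var 0)
    (.arr (.arr (liftTy 1 0 A) (.arr (.var 0) (.var 0))) (.var 0)))

/-- Negation `¬A = A → ⊥`. -/
def tyNeg (A : Ty) : Ty := .arr A tyBot

/-- The Gödel translation `A*` : every atomic subformula `R` is replaced
by `¬R`. -/
def godel : Ty → Ty
  | .var n => .arr (.var n) tyBot
  | .const c => .arr (.const c) tyBot
  | .arr a b => .arr (godel a) (godel b)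
  | .all a => .all (godel a)

/-- `T` is a storage operator for the pair of types `(E, S)`. -/
def IsStorageOpPair (T : Trm) (E S : Ty) : Prop :=
  TrmClosed T ∧
    ∀ t : Trm, TypF [] t E →
      ∃ τ τ' : Trm, BetaEq τ τ' ∧ TypF [] τ' S ∧
        ∀ θ : Trm, BetaEq θ t →
          ∀ f : ℕ, ¬ FreeIn f θ → ¬ FreeIn f τ →
            ∃ σ : ℕ → Trm,
              WHRed (.app (.app T θ) (.var f)) (.app (.var f) (msubst σ τ))

/-- `T` is a storage operator for the type `D`. -/
def IsStorageOp (T : Trm) (D : Ty) : Prop := IsStorageOpPair T D D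

/-- The term `λx₁…λxₙ.α` (n-fold abstraction over the free variable `α`). -/
def nlam (n a : ℕ) : Trm := Trm.lam^[n] (Trm.var (a + n))

/-- The term `p_n = λx₁…λxₙλx.x`. -/
def pTrm (n : ℕ) : Trm := Trm.lam^[n] (Trm.lam (Trm.var 0))

/-- `B₁ → … → B_n → A`. -/
def mkArr (Bs : List Ty) (A : Ty) : Ty := Bs.foldr Ty.arr A

/-- The length `Lg(E)` of a type : the number of occurrences of `→` in it. -/
def Lg : Ty → ℕ
  | .var _ => 0
  | .const _ => 0
  | .arr a b => Lg a + Lg b + 1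
  | .all a => Lg a

/-- `SubtypeOf A E` : `A` is a subtype (subformula) of `E`. -/
inductive SubtypeOf : Ty → Ty → Prop
  | refl (A : Ty) : SubtypeOf A A
  | arrL {A B C : Ty} : SubtypeOf A B → SubtypeOf A (.arr B C)
  | arrR {A B C : Ty} : SubtypeOf A C → SubtypeOf A (.arr B C)
  | all {A B : Ty} : SubtypeOf A B → SubtypeOf A (.all B)

/-- `InAppPos k t` : the variable `k` occurs in application (function)
position in `t`, i.e. some subterm of `t` is of the form `(k)u`. -/
def InAppPos : ℕ → Trm → Prop
  | _, .var _ => False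
  | k, .app u v => u = .var k ∨ InAppPos k u ∨ InAppPos k v
  | k, .lam u => InAppPos (k + 1) u

/-- The simple translation `A^s` : `X^s = X`, `(B → C)^s = B^s → C^s`,
`(∀X B)^s = B^s` (the variables freed by erasing the quantifiers are collapsed
onto the type variable `0`). `d` counts the erased quantifiers. -/
def eraseTyAux : ℕ → Ty → Ty
  | d, .var n => .var (n - d)
  | _, .const c => .const c
  | d, .arr a b => .arr (eraseTyAux d a) (eraseTyAux d b)
  | d, .all a => eraseTyAux (d + 1) a

/-- The simple translation `A^s`. -/
def eraseTy : Ty → Ty := eraseTyAux 0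

/-- The identity term `λx.x`. -/
def idTrm : Trm := .lam (.var 0)

/-- The boolean `𝟙 = λxλy.x`. -/
def oneTrm : Trm := .lam (.lam (.var 1))

/-- The pair of λ-terms `(T_F, T'_F)` associated with a type `F` (the
distinguished variable `X` having de Bruijn index `k`; the term variable `α`
is the free term variable `0`):
`T_F = T'_F = λx.x` if `X ∉ Fv(F)`;
`T_X = λxλβλg.(g)xα`, `T'_X = λx.(x)α𝟙`;
`T_{C→D} = λxλy.(T_D)(x)(T'_C)y`, `T'_{C→D} = λxλy.(T'_D)(x)(T_C)y`;
`T_{∀Y B} = λx.(T_B)x`, `T'_{∀Y B} = λx.(T'_B)x`. -/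
def TTpair : ℕ → Ty → Trm × Trm
  | k, .var n =>
      if n = k then
        (.lam (.lam (.lam (.app (.app (.var 0) (.var 2)) (.var 3)))),
         .lam (.app (.app (.var 0) (.var 1)) oneTrm))
      else (idTrm, idTrm)
  | _, .const _ => (idTrm, idTrm)
  | k, .arr C D =>
      if tyFreeInB k (.arr C D) then
        (.lam (.lam (.app (liftTrm 2 0 (TTpair k D).1)
            (.app (.var 1) (.app (liftTrm 2 0 (TTpair k C).2) (.var 0))))),
         .lam (.lam (.app (liftTrm 2 0 (TTpair k D).2)
            (.app (.var 1) (.app (liftTrm 2 0 (TTpair k C).1) (.var 0))))))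
      else (idTrm, idTrm)
  | k, .all B =>
      if tyFreeInB k (.all B) then
        (.lam (.app (liftTrm 1 0 (TTpair (k + 1) B).1) (.var 0)),
         .lam (.app (liftTrm 1 0 (TTpair (k + 1) B).2) (.var 0)))
      else (idTrm, idTrm)


/-! Auxiliary development for Statement 15. -/

lemma iterLam_succ (n : ℕ) (t : Trm) :
    Trm.lam^[n+1] t = .lam (Trm.lam^[n] t) := Function.iterate_succ_apply' _ _ _

lemma freeIn_iterLam (n a : ℕ) : FreeIn a (Trm.lam^[n] (.var (a + n))) := by
  induction n generalizing a with
  | zero => simp [FreeIn]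
  | succ n ih =>
    rw [iterLam_succ]
    show FreeIn (a+1) (Trm.lam^[n] (.var (a + (n+1))))
    have h : a + (n+1) = (a+1) + n := by omega
    rw [h]; exact ih (a+1)

lemma freeIn_nlam (n a : ℕ) : FreeIn a (nlam n a) := freeIn_iterLam n a

lemma noStep_iterLam (n m : ℕ) : ∀ u, ¬ BetaStep (Trm.lam^[n] (.var m)) u := by
  induction n with
  | zero => intro u h; cases h
  | succ n ih =>
    intro u h
    rw [iterLam_succ] at h
    cases h with
    | lam h' => exact ih _ h'

lemma lift_iterLam (d k n m : ℕ) :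
    liftTrm d k (Trm.lam^[n] (.var m)) = Trm.lam^[n] (liftTrm d (k+n) (.var m)) := by
  induction n generalizing k with
  | zero => simp
  | succ n ih =>
    rw [iterLam_succ, iterLam_succ]
    show Trm.lam (liftTrm d (k+1) (Trm.lam^[n] (.var m))) = _
    rw [ih (k+1)]
    have h : k + 1 + n = k + (n+1) := by omega
    rw [h]

lemma lift_nlam (n a : ℕ) : liftTrm 1 0 (nlam n a) = nlam n (a+1) := by
  unfold nlam
  rw [lift_iterLam]
  have h1 : liftTrm 1 (0+n) (.var (a+n)) = .var (a+1+n) := by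
    show (if a + n < 0 + n then Trm.var (a+n) else Trm.var (a+n+1)) = _
    rw [if_neg (by omega)]
    congr 1; omega
  rw [h1]

lemma subst_iterLam (n m k : ℕ) (u : Trm) :
    substTrm (Trm.lam^[n] (.var m)) k u = Trm.lam^[n] (substTrm (.var m) (k+n) u) := by
  induction n generalizing k with
  | zero => simp
  | succ n ih =>
    rw [iterLam_succ, iterLam_succ]
    show Trm.lam (substTrm (Trm.lam^[n] (.var m)) (k+1) u) = _
    rw [ih (k+1)]
    have h : k + 1 + n = k + (n+1) := by omega
    rw [h]

lemma subst_nlam_body (n a : ℕ) (u : Trm) :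
    substTrm (Trm.lam^[n] (.var (a + n + 1))) 0 u = nlam n a := by
  rw [subst_iterLam]
  have h1 : substTrm (.var (a+n+1)) (0+n) u = .var (a+n) := by
    simp only [substTrm]
    rw [if_neg (by omega : ¬ a+n+1 < 0+n), if_neg (by omega : ¬ a+n+1 = 0+n),
      show a+n+1-1 = a+n from by omega]
  rw [h1]; rfl

lemma nlam_ne_app (n a : ℕ) (f x : Trm) : nlam n a ≠ .app f x := by
  cases n with
  | zero => exact fun h => by simp [nlam] at h
  | succ n => rw [nlam, iterLam_succ]; exact fun h => by simp at h

lemma nlam_eq_lam {n a : ℕ} {B : Trm} (h : nlam n a = .lam B) :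
    ∃ m, n = m + 1 ∧ B = Trm.lam^[m] (.var (a + m + 1)) := by
  cases n with
  | zero => simp [nlam] at h
  | succ m =>
    rw [nlam, iterLam_succ] at h
    refine ⟨m, rfl, ?_⟩
    injection h with h'
    rw [← h']
    rfl

mutual
/-- Terms allowed in function position, at binder depth `d`. -/
inductive FnG (α : ℕ) : ℕ → Trm → Prop
  | var (d k : ℕ) : FnG α d (.var k)
  | nl (d n : ℕ) {u : Trm} : u = nlam n (α + d) → FnG α d u
  | app {d : ℕ} {f a : Trm} : FnG α d f → TmG α d a → FnG α d (.app f a)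
/-- The invariant grammar of reachable terms, at binder depth `d`. -/
inductive TmG (α : ℕ) : ℕ → Trm → Prop
  | fn {d : ℕ} {u : Trm} : FnG α d u → TmG α d u
  | lam {d : ℕ} {u : Trm} : TmG α (d+1) u → TmG α d (.lam u)
end

lemma pres {u u' : Trm} (h : BetaStep u u') :
    ∀ α d, (FnG α d u → FnG α d u' ∧ (FreeIn (α+d) u → FreeIn (α+d) u'))
         ∧ (TmG α d u → TmG α d u' ∧ (FreeIn (α+d) u → FreeIn (α+d) u')) := by
  induction h with
  | beta B arg =>
    intro α d
    have key : FnG α d (.app (.lam B) arg) →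
        FnG α d (substTrm B 0 arg) ∧ FreeIn (α+d) (substTrm B 0 arg) := by
      intro hf
      cases hf with
      | nl _ n heq => exact absurd heq.symm (nlam_ne_app n (α+d) _ _)
      | app hf ha =>
        cases hf with
        | nl _ n heq =>
          obtain ⟨m, rfl, rfl⟩ := nlam_eq_lam heq.symm
          rw [subst_nlam_body]
          exact ⟨.nl d m rfl, freeIn_nlam m (α+d)⟩
    constructor
    · intro hf; exact ⟨(key hf).1, fun _ => (key hf).2⟩
    · intro ht
      cases ht with
      | fn hf => exact ⟨.fn (key hf).1, fun _ => (key hf).2⟩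
  | appL u0 hstep ih =>
    rename_i f f'
    intro α d
    have key : FnG α d (.app f u0) → FnG α d (.app f' u0) ∧
        (FreeIn (α+d) (.app f u0) → FreeIn (α+d) (.app f' u0)) := by
      intro hf
      cases hf with
      | nl _ n heq => exact absurd heq.symm (nlam_ne_app n (α+d) _ _)
      | app hff ha =>
        obtain ⟨hf', hfr⟩ := (ih α d).1 hff
        refine ⟨.app hf' ha, ?_⟩
        intro hin
        cases hin with
        | inl h1 => exact Or.inl (hfr h1)
        | inr h2 => exact Or.inr h2
    refine ⟨key, ?_⟩
    intro ht
    cases ht with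
    | fn hf => exact ⟨.fn (key hf).1, (key hf).2⟩
  | appR t0 hstep ih =>
    rename_i a a'
    intro α d
    have key : FnG α d (.app t0 a) → FnG α d (.app t0 a') ∧
        (FreeIn (α+d) (.app t0 a) → FreeIn (α+d) (.app t0 a')) := by
      intro hf
      cases hf with
      | nl _ n heq => exact absurd heq.symm (nlam_ne_app n (α+d) _ _)
      | app hff ha =>
        obtain ⟨ha', har⟩ := (ih α d).2 ha
        refine ⟨.app hff ha', ?_⟩
        intro hin
        cases hin with
        | inl h1 => exact Or.inl h1
        | inr h2 => exact Or.inr (har h2)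
    refine ⟨key, ?_⟩
    intro ht
    cases ht with
    | fn hf => exact ⟨.fn (key hf).1, (key hf).2⟩
  | lam hstep ih =>
    intro α d
    have keyF : ∀ B, FnG α d (Trm.lam B) → ¬ BetaStep B (Trm.lam B) → True := fun _ _ _ => trivial
    constructor
    · intro hf
      cases hf with
      | nl _ n heq =>
        obtain ⟨m, rfl, rfl⟩ := nlam_eq_lam heq.symm
        exact absurd hstep (noStep_iterLam m (α+d+m+1) _)
    · intro ht
      cases ht with
      | fn hf =>
        cases hf with
        | nl _ n heq =>
          obtain ⟨m, rfl, rfl⟩ := nlam_eq_lam heq.symm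
          exact absurd hstep (noStep_iterLam m (α+d+m+1) _)
      | lam htt =>
        obtain ⟨ht', hfr⟩ := (ih α (d+1)).2 htt
        exact ⟨.lam ht', hfr⟩

lemma presRed {u v : Trm} (h : BetaRed u v) (α : ℕ) (ht : TmG α 0 u)
    (hf : FreeIn α u) : FreeIn α v := by
  have : TmG α 0 v ∧ FreeIn α v := by
    induction h with
    | refl => exact ⟨ht, hf⟩
    | tail _ hstep ih =>
      obtain ⟨tb, fb⟩ := ih
      obtain ⟨t', f'⟩ := (pres hstep α 0).2 tb
      exact ⟨t', f' fb⟩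
  exact this.2

/-- The substitutions compatible with the grammar at depth `d`. -/
def GoodSub (α d : ℕ) (σ : ℕ → Trm) : Prop :=
  ∀ m, σ m = .var m ∨ ∃ n, σ m = nlam n (α + d)

lemma goodSub_lift {α d : ℕ} {σ : ℕ → Trm} (h : GoodSub α d σ) :
    GoodSub α (d+1) (liftSub σ) := by
  intro m
  cases m with
  | zero => exact Or.inl rfl
  | succ m =>
    rcases h m with h1 | ⟨n, h1⟩
    · left
      show liftTrm 1 0 (σ m) = _
      rw [h1]
      show (if m < 0 then Trm.var m else Trm.var (m+1)) = _
      rw [if_neg (by omega)]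
    · right
      refine ⟨n, ?_⟩
      show liftTrm 1 0 (σ m) = _
      rw [h1, lift_nlam]
      rfl

lemma isNormal_lam {t : Trm} (h : IsNormal (.lam t)) : IsNormal t :=
  fun u hu => h _ (.lam hu)
lemma isNormal_appL {f a : Trm} (h : IsNormal (.app f a)) : IsNormal f :=
  fun u hu => h _ (.appL _ hu)
lemma isNormal_appR {f a : Trm} (h : IsNormal (.app f a)) : IsNormal a :=
  fun u hu => h _ (.appR _ hu)
lemma isNormal_app_ne_lam {f a : Trm} (h : IsNormal (.app f a)) (B : Trm) :
    f ≠ .lam B := by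
  rintro rfl; exact h _ (.beta B a)

lemma initG : ∀ t : Trm, IsNormal t → ∀ α d σ, GoodSub α d σ →
    TmG α d (msubst σ t) ∧ ((∀ B, t ≠ .lam B) → FnG α d (msubst σ t)) := by
  intro t
  induction t with
  | var m =>
    intro _ α d σ hσ
    have hfn : FnG α d (msubst σ (.var m)) := by
      show FnG α d (σ m)
      rcases hσ m with h1 | ⟨n, h1⟩
      · rw [h1]; exact .var d m
      · exact .nl d n h1
    exact ⟨.fn hfn, fun _ => hfn⟩
  | app f a ihf iha =>
    intro hn α d σ hσ
    have hf := (ihf (isNormal_appL hn) α d σ hσ).2 (isNormal_app_ne_lam hn)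
    have ha := (iha (isNormal_appR hn) α d σ hσ).1
    have hfn : FnG α d (msubst σ (.app f a)) := .app hf ha
    exact ⟨.fn hfn, fun _ => hfn⟩
  | lam b ihb =>
    intro hn α d σ hσ
    refine ⟨.lam (ihb (isNormal_lam hn) α (d+1) _ (goodSub_lift hσ)).1, ?_⟩
    intro h; exact absurd rfl (h b)

lemma freeIn_lift : ∀ (u : Trm) (j k : ℕ), k ≤ j → FreeIn j u →
    FreeIn (j+1) (liftTrm 1 k u) := by
  intro u
  induction u with
  | var n =>
    intro j k hk h
    have hn : n = j := h
    subst hn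
    show FreeIn (n+1) (if n < k then Trm.var n else Trm.var (n+1))
    rw [if_neg (by omega)]
    rfl
  | app a b iha ihb =>
    intro j k hk h
    cases h with
    | inl h1 => exact Or.inl (iha j k hk h1)
    | inr h2 => exact Or.inr (ihb j k hk h2)
  | lam a ih =>
    intro j k hk h
    exact ih (j+1) (k+1) (by omega) h

lemma freeIn_msubst : ∀ (t : Trm) (k : ℕ) (σ : ℕ → Trm) (j : ℕ),
    FreeIn k t → FreeIn j (σ k) → FreeIn j (msubst σ t) := by
  intro t
  induction t with
  | var n =>
    intro k σ j h hj
    have hn : n = k := h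
    subst hn
    exact hj
  | app a b iha ihb =>
    intro k σ j h hj
    cases h with
    | inl h1 => exact Or.inl (iha k σ j h1 hj)
    | inr h2 => exact Or.inr (ihb k σ j h2 hj)
  | lam a ih =>
    intro k σ j h hj
    exact ih (k+1) (liftSub σ) (j+1) h (freeIn_lift (σ k) j 0 (by omega) hj)


/-- if `t` is normal, `v` is closed and the simultaneous
substitution `t[λy₁₁…λy₁ₙ₁.α / x₁, …, λy_{r1}…λy_{rn_r}.α / x_r]` β-reduces
to `v`, then `x_i ∉ Fv(t)` for every `i`. -/
theorem not_free_if_msubst_reduces_to_closed (t v : Trm) (ht : IsNormal t)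
    (hv : TrmClosed v) (r : ℕ) (x : Fin r → ℕ)
    (hinj : Function.Injective x) (nn : Fin r → ℕ) (α : ℕ)
    (hα : ∀ i, x i ≠ α) (σ : ℕ → Trm)
    (hσ : ∀ i, σ (x i) = nlam (nn i) α)
    (hσ' : ∀ k, (∀ i, x i ≠ k) → σ k = .var k)
    (h : BetaRed (msubst σ t) v) :
    ∀ i, ¬ FreeIn (x i) t := by
  intro i hfree
  have hQ : GoodSub α 0 σ := by
    intro m
    by_cases h : ∃ i, x i = m
    · obtain ⟨i, rfl⟩ := h
      exact Or.inr ⟨nn i, hσ i⟩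
    · exact Or.inl (hσ' m (fun i hm => h ⟨i, hm⟩))
  have hG := (initG t ht α 0 σ hQ).1
  have hF : FreeIn α (msubst σ t) :=
    freeIn_msubst t (x i) σ α hfree (by rw [hσ i]; exact freeIn_nlam _ _)
  exact hv α (presRed h α hG hF)

end FarkhNour
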